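/- Let 0 < q < 1, p > 1, and α < 1 - 1/p. For every nonnegative function f on (0,1], not identically zero on {q^k : k ≥ 0}, the strict inequality ∑_{j=0}^∞ q^{j(p(α-1)+1)} (∑_{i=j}^∞ q^{i(1-α)} f(q^i))^p < (1-q)^{-p}(1 - q^{(p-1)/p-α})^{-p} ∑_{i=0}^∞ q^i f(q^i)^p holds (assuming the right-hand side is finite); equivalently ∫_0^1 x^{p(α-1)}(∫_0^x t^{-α} f d_q t)^p d_q x < [(p-1)/p - α]_q^{-p} ∫_0^1 f^p d_q t. -/

import Mathlib

/-!
With `δ = (p - 1) / p - α > 0`, `ρ = q ^ δ` and `b i = q ^ (i / p) * f (q ^ i)`, the left-hand side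
is `∑ j, (∑ m, ρ ^ m * b (j + m)) ^ p`. Jensen's inequality for the weights `ρ ^ m`, followed by an
exchange of the two sums, bounds it by `(∑ m, ρ ^ m) ^ p * ∑ i, b i ^ p`, which is
`(1 - q ^ δ) ^ (-p) * ∑ i, q ^ i * f (q ^ i) ^ p`. The inequality is strict because the constant
of the theorem carries the extra factor `(1 - q) ^ (-p) > 1` and the right-hand sum is positive
and finite.
-/

open scoped ENNReal

namespace ENNReal

theorem tsum_mul_le_weight_mul_Lp {ι : Type*} {p : ℝ} (hp : 1 ≤ p) (w f : ι → ℝ≥0∞) :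
    ∑' i, w i * f i ≤ (∑' i, w i) ^ (1 - p⁻¹) * (∑' i, w i * f i ^ p) ^ p⁻¹ := by
  rw [ENNReal.tsum_eq_iSup_sum]
  refine iSup_le fun s => (inner_le_weight_mul_Lp_of_nonneg s hp w f).trans ?_
  gcongr
  · exact sub_nonneg.2 (inv_le_one_of_one_le₀ hp)
  · exact ENNReal.sum_le_tsum s
  · exact ENNReal.sum_le_tsum s

theorem rpow_tsum_mul_le {ι : Type*} {p : ℝ} (hp : 1 ≤ p) (w f : ι → ℝ≥0∞) :
    (∑' i, w i * f i) ^ p ≤ (∑' i, w i) ^ (p - 1) * ∑' i, w i * f i ^ p := by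
  have hp₀ : 0 < p := zero_lt_one.trans_le hp
  calc (∑' i, w i * f i) ^ p
      ≤ ((∑' i, w i) ^ (1 - p⁻¹) * (∑' i, w i * f i ^ p) ^ p⁻¹) ^ p := by
        gcongr; exact tsum_mul_le_weight_mul_Lp hp w f
    _ = (∑' i, w i) ^ (p - 1) * ∑' i, w i * f i ^ p := by
        rw [mul_rpow_of_nonneg _ _ hp₀.le, ← rpow_mul, ← rpow_mul, inv_mul_cancel₀ hp₀.ne',
          rpow_one, sub_mul, one_mul, inv_mul_cancel₀ hp₀.ne']

theorem tsum_rpow_tsum_mul_add_le {p : ℝ} (hp : 1 ≤ p) (w b : ℕ → ℝ≥0∞) :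
    ∑' j, (∑' m, w m * b (j + m)) ^ p ≤ (∑' m, w m) ^ p * ∑' i, b i ^ p := by
  calc ∑' j, (∑' m, w m * b (j + m)) ^ p
      ≤ ∑' j, (∑' m, w m) ^ (p - 1) * ∑' m, w m * b (j + m) ^ p :=
        ENNReal.tsum_le_tsum fun j => rpow_tsum_mul_le hp w _
    _ = (∑' m, w m) ^ (p - 1) * ∑' m, w m * ∑' j, b (j + m) ^ p := by
        simp_rw [ENNReal.tsum_mul_left]
        rw [ENNReal.tsum_comm]
        simp_rw [ENNReal.tsum_mul_left]
    _ ≤ (∑' m, w m) ^ (p - 1) * ∑' m, w m * ∑' i, b i ^ p := by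
        gcongr _ * ∑' m, _ * ?_ with m
        exact tsum_comp_le_tsum_of_injective (add_left_injective m) (b · ^ p)
    _ = (∑' m, w m) ^ p * ∑' i, b i ^ p := by
        rw [ENNReal.tsum_mul_right, ← mul_assoc]
        congr 1
        nth_rw 2 [← rpow_one (∑' m, w m)]
        rw [← rpow_add_of_nonneg _ _ (sub_nonneg.2 hp) zero_le_one, sub_add_cancel]

end ENNReal

open ENNReal in
theorem q_hardy_tsum_le {Q : ℝ≥0∞} (hQ₀ : Q ≠ 0) (hQ : Q ≠ ⊤) {p α : ℝ} (hp : 1 ≤ p)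
    (g : ℕ → ℝ≥0∞) :
    ∑' j : ℕ, Q ^ ((j : ℝ) * (p * (α - 1) + 1)) *
        (∑' m : ℕ, Q ^ (((j : ℝ) + m) * (1 - α)) * g (j + m)) ^ p
      ≤ ((1 - Q ^ ((p - 1) / p - α))⁻¹) ^ p * ∑' i : ℕ, Q ^ (i : ℝ) * g i ^ p := by
  have hp₀ : 0 < p := zero_lt_one.trans_le hp
  set δ := (p - 1) / p - α with hδ
  have hweight (j : ℕ) : Q ^ ((j : ℝ) * (p * (α - 1) + 1)) = (Q ^ (-(j * δ))) ^ p := by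
    rw [← rpow_mul, hδ]; congr 1; field_simp; ring
  have hshift (j m : ℕ) : Q ^ (-(j * δ)) * (Q ^ (((j : ℝ) + m) * (1 - α)) * g (j + m)) =
      (Q ^ δ) ^ m * (Q ^ (((j + m : ℕ) : ℝ) / p) * g (j + m)) := by
    rw [← mul_assoc, ← mul_assoc, ← rpow_add _ _ hQ₀ hQ, ← rpow_natCast, ← rpow_mul,
      ← rpow_add _ _ hQ₀ hQ]
    congr 2; rw [hδ]; push_cast; field_simp; ring
  have hpow (i : ℕ) : (Q ^ ((i : ℝ) / p) * g i) ^ p = Q ^ (i : ℝ) * g i ^ p := by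
    rw [mul_rpow_of_nonneg _ _ hp₀.le, ← rpow_mul, div_mul_cancel₀ _ hp₀.ne']
  calc ∑' j : ℕ, Q ^ ((j : ℝ) * (p * (α - 1) + 1)) *
        (∑' m : ℕ, Q ^ (((j : ℝ) + m) * (1 - α)) * g (j + m)) ^ p
      = ∑' j : ℕ, (∑' m : ℕ, (Q ^ δ) ^ m * (Q ^ (((j + m : ℕ) : ℝ) / p) * g (j + m))) ^ p := by
        refine tsum_congr fun j => ?_
        rw [hweight, ← mul_rpow_of_nonneg _ _ hp₀.le, ← ENNReal.tsum_mul_left]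
        simp_rw [hshift]
    _ ≤ (∑' m : ℕ, (Q ^ δ) ^ m) ^ p * ∑' i : ℕ, (Q ^ ((i : ℝ) / p) * g i) ^ p :=
        tsum_rpow_tsum_mul_add_le hp _ fun i => Q ^ ((i : ℝ) / p) * g i
    _ = ((1 - Q ^ δ)⁻¹) ^ p * ∑' i : ℕ, Q ^ (i : ℝ) * g i ^ p := by
        rw [tsum_geometric]; simp_rw [hpow]

theorem inv_one_sub_ofReal_rpow_lt {q r p : ℝ} (hq : 0 < q) (hq1 : q < 1) (hr : 0 ≤ r)
    (hr1 : r < 1) (hp : 0 < p) :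
    ((1 - ENNReal.ofReal r)⁻¹) ^ p < ENNReal.ofReal (((1 - q) * (1 - r)) ^ (-p)) := by
  have hr' : 0 < 1 - r := sub_pos.2 hr1
  rw [← ENNReal.ofReal_one, ← ENNReal.ofReal_sub _ hr, ← ENNReal.ofReal_inv_of_pos hr',
    ENNReal.ofReal_rpow_of_pos (inv_pos.2 hr'), Real.inv_rpow hr'.le, ← Real.rpow_neg hr'.le,
    ENNReal.ofReal_lt_ofReal_iff (by positivity)]
  exact Real.rpow_lt_rpow_of_neg (by nlinarith) (by nlinarith) (neg_neg_of_pos hp)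

theorem q_hardy_finite_interval (q p α : ℝ) (hq : 0 < q) (hq1 : q < 1) (hp : 1 < p)
    (hα : α < 1 - 1 / p) (f : ℝ → ℝ≥0∞)
    (hf0 : ∃ k : ℕ, f (q ^ (k : ℝ)) ≠ 0)
    (hfin : (∑' i : ℕ, (ENNReal.ofReal q) ^ (i : ℝ) * (f (q ^ (i : ℝ))) ^ p) ≠ ⊤) :
    ∑' j : ℕ, (ENNReal.ofReal q) ^ ((j : ℝ) * (p * (α - 1) + 1)) *
        (∑' m : ℕ, (ENNReal.ofReal q) ^ (((j : ℝ) + (m : ℝ)) * (1 - α)) *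
          f (q ^ ((j : ℝ) + (m : ℝ)))) ^ p
      < ENNReal.ofReal (((1 - q) * (1 - q ^ ((p - 1) / p - α))) ^ (-p)) *
        ∑' i : ℕ, (ENNReal.ofReal q) ^ (i : ℝ) * (f (q ^ (i : ℝ))) ^ p := by
  have hp₀ : 0 < p := zero_lt_one.trans hp
  have hQ₀ : ENNReal.ofReal q ≠ 0 := ENNReal.ofReal_ne_zero_iff.2 hq
  have hδ : 0 < (p - 1) / p - α := by rw [sub_div, div_self hp₀.ne']; linarith
  have hT₀ : ∑' i : ℕ, (ENNReal.ofReal q) ^ (i : ℝ) * (f (q ^ (i : ℝ))) ^ p ≠ 0 := by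
    obtain ⟨k, hk⟩ := hf0
    refine fun hT => mul_ne_zero ?_ ?_ (ENNReal.tsum_eq_zero.1 hT k)
    · exact (ENNReal.rpow_pos (pos_iff_ne_zero.2 hQ₀) ENNReal.ofReal_ne_top).ne'
    · exact (ENNReal.rpow_eq_zero_iff_of_pos hp₀).not.2 hk
  have hconst := inv_one_sub_ofReal_rpow_lt hq hq1 (Real.rpow_pos_of_pos hq _).le
    (Real.rpow_lt_one hq.le hq1 hδ) hp₀
  rw [← ENNReal.ofReal_rpow_of_pos hq] at hconst
  calc _ ≤ ((1 - ENNReal.ofReal q ^ ((p - 1) / p - α))⁻¹) ^ p *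
        ∑' i : ℕ, (ENNReal.ofReal q) ^ (i : ℝ) * (f (q ^ (i : ℝ))) ^ p := by
        simpa only [Nat.cast_add] using
          q_hardy_tsum_le hQ₀ ENNReal.ofReal_ne_top hp.le fun i => f (q ^ (i : ℝ))
    _ < _ := (ENNReal.mul_lt_mul_iff_left hT₀ hfin).2 hconst
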